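/- arXiv:2201.07388 — 6 statements merged into one kernel-verified Lean document; each statement's English description precedes it below -/
import Mathlib

section
/- Let d : ℝ → ℝ be measurable, nonnegative, symmetric (d(z) = d(−z) for all z), and satisfy the triangle inequality d(z) ≤ d(w) + d(z − w) for all z, w ∈ ℝ. Let η > 0, C > 0, ε > 0, and h(z) = C·exp(−η·d(z)). Let P_i and P_j be probability measures on ℝ and let π be a coupling of P_i and P_j such that η·d(x − x') ≤ ε for π-almost every pair (x, x'). Define the sanitized densities q_i(y) = ∫ h(y − x) dP_i(x) and q_j(y) = ∫ h(y − x') dP_j(x'). Then for every y ∈ ℝ, q_i(y) ≤ exp(ε)·q_j(y) and q_j(y) ≤ exp(ε)·q_i(y). -/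
open MeasureTheory

/-- Kantorovich-exponential mechanism (Theorem 1), stated for an
arbitrary coupling whose support satisfies `η · d(x - x') ≤ ε` a.e. -/
theorem kantorovich_exponential_mechanism
    (d : ℝ → ℝ) (hd_meas : Measurable d)
    (hd_nonneg : ∀ z, 0 ≤ d z)
    (hd_symm : ∀ z, d z = d (-z))
    (hd_tri : ∀ z w, d z ≤ d w + d (z - w))
    (η C ε : ℝ) (hη : 0 < η) (hC : 0 < C) (hε : 0 < ε)
    (h : ℝ → ℝ) (hh : ∀ z, h z = C * Real.exp (-η * d z))
    (Pi Pj : Measure ℝ) [IsProbabilityMeasure Pi] [IsProbabilityMeasure Pj]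
    (μc : Measure (ℝ × ℝ)) [IsProbabilityMeasure μc]
    (hfst : μc.map Prod.fst = Pi) (hsnd : μc.map Prod.snd = Pj)
    (hsupp : ∀ᵐ p ∂μc, η * d (p.1 - p.2) ≤ ε) :
    ∀ y : ℝ,
      (∫ x, h (y - x) ∂Pi) ≤ Real.exp ε * ∫ x', h (y - x') ∂Pj ∧
      (∫ x', h (y - x') ∂Pj) ≤ Real.exp ε * ∫ x, h (y - x) ∂Pi := by
  intro y
  have hheq : h = fun z => C * Real.exp (-η * d z) := funext hh
  have hmeas : Measurable h := by
    rw [hheq]; exact measurable_const.mul ((hd_meas.const_mul (-η)).exp)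
  have hHnn : ∀ z, 0 ≤ h z := fun z => by rw [hh]; positivity
  have hbd : ∀ z, h z ≤ C := fun z => by
    rw [hh]
    have : Real.exp (-η * d z) ≤ 1 := by
      apply Real.exp_le_one_iff.mpr
      nlinarith [hd_nonneg z]
    nlinarith
  -- rewrite integrals over the coupling
  have hmi : Measurable fun p : ℝ × ℝ => h (y - p.1) :=
    hmeas.comp (measurable_const.sub measurable_fst)
  have hmj : Measurable fun p : ℝ × ℝ => h (y - p.2) :=
    hmeas.comp (measurable_const.sub measurable_snd)
  have hm1 : Measurable fun x : ℝ => h (y - x) :=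
    hmeas.comp (measurable_const.sub measurable_id)
  have hIi : (∫ x, h (y - x) ∂Pi) = ∫ p, h (y - p.1) ∂μc := by
    rw [← hfst, integral_map measurable_fst.aemeasurable hm1.aestronglyMeasurable]
  have hIj : (∫ x', h (y - x') ∂Pj) = ∫ p, h (y - p.2) ∂μc := by
    rw [← hsnd, integral_map measurable_snd.aemeasurable hm1.aestronglyMeasurable]
  have hinti : Integrable (fun p : ℝ × ℝ => h (y - p.1)) μc := by
    refine (integrable_const C).mono' hmi.aestronglyMeasurable ?_
    filter_upwards with p
    rw [Real.norm_eq_abs, abs_of_nonneg (hHnn _)]; exact hbd _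
  have hintj : Integrable (fun p : ℝ × ℝ => h (y - p.2)) μc := by
    refine (integrable_const C).mono' hmj.aestronglyMeasurable ?_
    filter_upwards with p
    rw [Real.norm_eq_abs, abs_of_nonneg (hHnn _)]; exact hbd _
  have key : ∀ p : ℝ × ℝ, η * d (p.1 - p.2) ≤ ε →
      h (y - p.1) ≤ Real.exp ε * h (y - p.2) ∧
      h (y - p.2) ≤ Real.exp ε * h (y - p.1) := by
    intro p hp
    have htri1 : d (y - p.1) ≤ d (y - p.2) + d (p.1 - p.2) := by
      have := hd_tri (y - p.1) (y - p.2)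
      have e : (y - p.1) - (y - p.2) = -(p.1 - p.2) := by ring
      rw [e, ← hd_symm] at this
      exact this
    have htri2 : d (y - p.2) ≤ d (y - p.1) + d (p.1 - p.2) := by
      have := hd_tri (y - p.2) (y - p.1)
      have e : (y - p.2) - (y - p.1) = p.1 - p.2 := by ring
      rw [e] at this
      exact this
    constructor
    · rw [hh, hh]
      have h1 : Real.exp (-η * d (y - p.1)) ≤ Real.exp ε * Real.exp (-η * d (y - p.2)) := by
        rw [← Real.exp_add]
        exact Real.exp_le_exp.mpr (by nlinarith)
      nlinarith [Real.exp_pos (-η * d (y - p.2)), Real.exp_pos ε]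
    · rw [hh, hh]
      have h1 : Real.exp (-η * d (y - p.2)) ≤ Real.exp ε * Real.exp (-η * d (y - p.1)) := by
        rw [← Real.exp_add]
        exact Real.exp_le_exp.mpr (by nlinarith)
      nlinarith [Real.exp_pos (-η * d (y - p.1)), Real.exp_pos ε]
  constructor
  · rw [hIi, hIj, ← integral_const_mul]
    refine integral_mono_ae hinti (hintj.const_mul _) ?_
    filter_upwards [hsupp] with p hp
    exact (key p hp).1
  · rw [hIi, hIj, ← integral_const_mul]
    refine integral_mono_ae hintj (hinti.const_mul _) ?_
    filter_upwards [hsupp] with p hp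
    exact (key p hp).2
end

section
/- Let θ > 0 and ε > 0, and let h be the Laplace density h(z) = (1/(2θ))·exp(−|z|/θ). Let P_i and P_j be probability measures on ℝ and let π be a coupling of P_i and P_j such that |x − x'| ≤ ε·θ for π-almost every pair (x, x'). Define q_i(y) = ∫ h(y − x) dP_i(x) and q_j(y) = ∫ h(y − x') dP_j(x'). Then for every y ∈ ℝ, exp(−ε)·q_j(y) ≤ q_i(y) ≤ exp(ε)·q_j(y); in particular |log(q_i(y)/q_j(y))| ≤ ε. -/
open MeasureTheory

/-- Kantorovich–Laplace mechanism (Lemma 1), stated for an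
arbitrary coupling whose support satisfies `|x - x'| ≤ ε·θ` a.e. -/
theorem kantorovich_laplace_mechanism
    (θ ε : ℝ) (hθ : 0 < θ) (hε : 0 < ε)
    (h : ℝ → ℝ) (hh : ∀ z, h z = (1 / (2 * θ)) * Real.exp (-|z| / θ))
    (Pi Pj : Measure ℝ) [IsProbabilityMeasure Pi] [IsProbabilityMeasure Pj]
    (μc : Measure (ℝ × ℝ)) [IsProbabilityMeasure μc]
    (hfst : μc.map Prod.fst = Pi) (hsnd : μc.map Prod.snd = Pj)
    (hsupp : ∀ᵐ p ∂μc, |p.1 - p.2| ≤ ε * θ) :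
    ∀ y : ℝ,
      Real.exp (-ε) * (∫ x', h (y - x') ∂Pj) ≤ (∫ x, h (y - x) ∂Pi) ∧
      (∫ x, h (y - x) ∂Pi) ≤ Real.exp ε * (∫ x', h (y - x') ∂Pj) ∧
      |Real.log ((∫ x, h (y - x) ∂Pi) / (∫ x', h (y - x') ∂Pj))| ≤ ε := by
  intro y
  have hc : (0:ℝ) < 1 / (2 * θ) := by positivity
  have hpos : ∀ z, 0 < h z := by
    intro z; rw [hh z]; positivity
  have hcont : Continuous h := by
    have : h = fun z => (1 / (2 * θ)) * Real.exp (-|z| / θ) := funext hh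
    rw [this]; continuity
  have hbound : ∀ z, ‖h z‖ ≤ 1 / (2 * θ) := by
    intro z
    rw [Real.norm_eq_abs, abs_of_pos (hpos z), hh z]
    have h1 : Real.exp (-|z| / θ) ≤ 1 := by
      rw [Real.exp_le_one_iff]
      apply div_nonpos_of_nonpos_of_nonneg (neg_nonpos.2 (abs_nonneg z)) hθ.le
    nlinarith
  -- pointwise key inequality
  have key : ∀ a b : ℝ, |a - b| ≤ ε * θ → h a ≤ Real.exp ε * h b := by
    intro a b hab
    rw [hh a, hh b, mul_left_comm, ← Real.exp_add]
    apply mul_le_mul_of_nonneg_left _ hc.le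
    apply Real.exp_le_exp.2
    have h1 : |b| - |a| ≤ ε * θ := le_trans (abs_sub_abs_le_abs_sub b a)
      (by rwa [abs_sub_comm])
    calc -|a| / θ ≤ (ε * θ + -|b|) / θ := (div_le_div_iff_of_pos_right hθ).2 (by linarith)
      _ = ε + -|b| / θ := by field_simp
  -- integrability
  have hmeas1 : Continuous (fun p : ℝ × ℝ => h (y - p.1)) :=
    hcont.comp (continuous_const.sub continuous_fst)
  have hmeas2 : Continuous (fun p : ℝ × ℝ => h (y - p.2)) :=
    hcont.comp (continuous_const.sub continuous_snd)
  have hint1 : Integrable (fun p : ℝ × ℝ => h (y - p.1)) μc :=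
    (integrable_const (1 / (2 * θ))).mono' hmeas1.aestronglyMeasurable
      (ae_of_all _ fun p => hbound _)
  have hint2 : Integrable (fun p : ℝ × ℝ => h (y - p.2)) μc :=
    (integrable_const (1 / (2 * θ))).mono' hmeas2.aestronglyMeasurable
      (ae_of_all _ fun p => hbound _)
  have hintP : ∀ (P : Measure ℝ) [IsProbabilityMeasure P],
      Integrable (fun x : ℝ => h (y - x)) P := by
    intro P _
    exact (integrable_const (1 / (2 * θ))).mono'
      ((hcont.comp (continuous_const.sub continuous_id)).aestronglyMeasurable)
      (ae_of_all _ fun x => hbound _)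
  -- rewrite the two integrals through the coupling
  have hcy : Continuous (fun x : ℝ => h (y - x)) :=
    hcont.comp (continuous_const.sub continuous_id)
  have e1 : (∫ x, h (y - x) ∂Pi) = ∫ p, h (y - p.1) ∂μc := by
    rw [← hfst]
    exact integral_map measurable_fst.aemeasurable hcy.aestronglyMeasurable
  have e2 : (∫ x', h (y - x') ∂Pj) = ∫ p, h (y - p.2) ∂μc := by
    rw [← hsnd]
    exact integral_map measurable_snd.aemeasurable hcy.aestronglyMeasurable
  -- upper bound
  have hub : (∫ x, h (y - x) ∂Pi) ≤ Real.exp ε * (∫ x', h (y - x') ∂Pj) := by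
    rw [e1, e2, ← integral_const_mul]
    refine integral_mono_ae hint1 (hint2.const_mul _) ?_
    filter_upwards [hsupp] with p hp
    exact key (y - p.1) (y - p.2)
      (by rw [show (y - p.1) - (y - p.2) = p.2 - p.1 by ring, abs_sub_comm]; exact hp)
  -- lower bound
  have hlb : Real.exp (-ε) * (∫ x', h (y - x') ∂Pj) ≤ (∫ x, h (y - x) ∂Pi) := by
    rw [e1, e2, ← integral_const_mul]
    refine integral_mono_ae (hint2.const_mul _) hint1 ?_
    filter_upwards [hsupp] with p hp
    have hk : h (y - p.2) ≤ Real.exp ε * h (y - p.1) :=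
      key (y - p.2) (y - p.1)
        (by rw [show (y - p.2) - (y - p.1) = p.1 - p.2 by ring]; exact hp)
    calc Real.exp (-ε) * h (y - p.2)
        ≤ Real.exp (-ε) * (Real.exp ε * h (y - p.1)) :=
          mul_le_mul_of_nonneg_left hk (Real.exp_pos _).le
      _ = h (y - p.1) := by rw [← mul_assoc, ← Real.exp_add]; simp
  -- positivity of the two integrals
  have hqpos : ∀ (P : Measure ℝ) [IsProbabilityMeasure P],
      0 < ∫ x, h (y - x) ∂P := by
    intro P _
    rw [integral_pos_iff_support_of_nonneg_ae
      (ae_of_all _ fun x => (hpos (y - x)).le) (hintP P)]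
    have : (Function.support fun x : ℝ => h (y - x)) = Set.univ := by
      ext x; simp [Function.support, (hpos (y - x)).ne']
    rw [this]
    simp
  have hqi : 0 < ∫ x, h (y - x) ∂Pi := hqpos Pi
  have hqj : 0 < ∫ x', h (y - x') ∂Pj := hqpos Pj
  refine ⟨hlb, hub, ?_⟩
  rw [abs_le]
  constructor
  · rw [Real.le_log_iff_exp_le (div_pos hqi hqj), le_div_iff₀ hqj]
    linarith
  · rw [Real.log_le_iff_le_exp (div_pos hqi hqj), div_le_iff₀ hqj]
    linarith
end

section
/- Let (Ω, μ) be a probability space, let 𝒮 be a nonempty set, and for each a ∈ 𝒮 let f(a, ·) : Ω → ℝ be measurable. Let d : ℝ → ℝ be measurable, nonnegative, symmetric (d(z) = d(−z) for all z), and satisfy the triangle inequality d(z) ≤ d(w) + d(z − w) for all z, w ∈ ℝ; let η > 0, C > 0 and h(z) = C·exp(−η·d(z)). Suppose there is Δ ≥ 0 with d(f(a, s) − f(b, s)) ≤ Δ for all a, b ∈ 𝒮 and all s ∈ Ω, and suppose η·Δ ≤ ε. Define q_a(y) = ∫ h(y − f(a, s)) dμ(s). Then for all a, b ∈ 𝒮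 and all y ∈ ℝ, q_a(y) ≤ exp(ε)·q_b(y). -/
open MeasureTheory

/-- Lemma 2(a) — calibrating exponential-mechanism noise to the
sensitivity of a deterministic query attains ε-pufferfish privacy. -/
theorem calibrate_to_sensitivity_deterministic_query
    {Ω : Type*} [MeasurableSpace Ω] (μ : Measure Ω) [IsProbabilityMeasure μ]
    {S : Type*} [Nonempty S]
    (f : S → Ω → ℝ) (hf_meas : ∀ a, Measurable (f a))
    (d : ℝ → ℝ) (hd_meas : Measurable d)
    (hd_nonneg : ∀ z, 0 ≤ d z)
    (hd_symm : ∀ z, d z = d (-z))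
    (hd_tri : ∀ z w, d z ≤ d w + d (z - w))
    (η C ε : ℝ) (hη : 0 < η) (hC : 0 < C)
    (h : ℝ → ℝ) (hh : ∀ z, h z = C * Real.exp (-η * d z))
    (Δ : ℝ) (hΔ : 0 ≤ Δ)
    (hsens : ∀ a b : S, ∀ s : Ω, d (f a s - f b s) ≤ Δ)
    (hηΔ : η * Δ ≤ ε) :
    ∀ a b : S, ∀ y : ℝ,
      (∫ s, h (y - f a s) ∂μ) ≤ Real.exp ε * ∫ s, h (y - f b s) ∂μ := by
  intro a b y
  -- measurability & integrability of the integrands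
  have hmeas : ∀ c : S, Measurable (fun s => h (y - f c s)) := by
    intro c
    have hm : Measurable (fun s => C * Real.exp (-η * d (y - f c s))) :=
      measurable_const.mul (Real.measurable_exp.comp
        (measurable_const.mul (hd_meas.comp
          (measurable_const.sub (hf_meas c)))))
    simpa [hh] using hm
  have hbound : ∀ (c : S) (s : Ω), |h (y - f c s)| ≤ C := by
    intro c s
    rw [hh, abs_of_nonneg (by positivity)]
    have h1 : Real.exp (-η * d (y - f c s)) ≤ 1 := by
      apply Real.exp_le_one_iff.mpr
      have := hd_nonneg (y - f c s)
      nlinarith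
    nlinarith
  have hint : ∀ c : S, Integrable (fun s => h (y - f c s)) μ := by
    intro c
    apply Integrable.mono' (integrable_const C) (hmeas c).aestronglyMeasurable
    exact Filter.Eventually.of_forall (hbound c)
  -- pointwise bound
  have hpt : ∀ s, h (y - f a s) ≤ Real.exp ε * h (y - f b s) := by
    intro s
    rw [hh, hh]
    have htri : d (y - f b s) ≤ d (y - f a s) + Δ := by
      have := hd_tri (y - f b s) (y - f a s)
      have h2 : (y - f b s) - (y - f a s) = f a s - f b s := by ring
      rw [h2] at this
      have := hsens a b s
      linarith
    have key : -η * d (y - f a s) ≤ ε + -η * d (y - f b s) := by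
      nlinarith
    calc C * Real.exp (-η * d (y - f a s))
        ≤ C * (Real.exp ε * Real.exp (-η * d (y - f b s))) := by
          rw [← Real.exp_add]
          exact mul_le_mul_of_nonneg_left (Real.exp_le_exp.mpr key) hC.le
      _ = Real.exp ε * (C * Real.exp (-η * d (y - f b s))) := by ring
  calc (∫ s, h (y - f a s) ∂μ)
      ≤ ∫ s, Real.exp ε * h (y - f b s) ∂μ :=
        integral_mono (hint a) ((hint b).const_mul _) hpt
    _ = Real.exp ε * ∫ s, h (y - f b s) ∂μ := integral_const_mul _ _
end

section
/- Let P be a probability measure on ℝ, δ ∈ ℝ, and let Q be the pushforward of P under x ↦ x − δ. Let d : ℝ → ℝ be measurable, nonnegative, symmetric (d(z) = d(−z) for all z), and satisfy the triangle inequality d(z) ≤ d(w) + d(z − w) for all z, w ∈ ℝ; let η > 0, C > 0, ε > 0 with η·d(δ) ≤ ε, and set h(z) = C·exp(−η·d(z)). Then for every y ∈ ℝ, ∫ h(y − x) dP(x) ≤ exp(ε)·∫ h(y − x') dQ(x') and ∫ h(y − x') dQ(x') ≤ exp(ε)·∫ h(y − x) dP(x). -/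
open MeasureTheory

/-- ε-pufferfish privacy of the exponential mechanism for
separable query functions, where the two conditional output distributions
differ by a translation by δ and η·d(δ) ≤ ε. -/
theorem exponential_mechanism_translated_distributions
    (P : Measure ℝ) [IsProbabilityMeasure P] (δ : ℝ)
    (Q : Measure ℝ) (hQ : Q = P.map (fun x => x - δ))
    (d : ℝ → ℝ) (hd_meas : Measurable d)
    (hd_nonneg : ∀ z, 0 ≤ d z)
    (hd_symm : ∀ z, d z = d (-z))
    (hd_tri : ∀ z w, d z ≤ d w + d (z - w))
    (η C ε : ℝ) (hη : 0 < η) (hC : 0 < C) (hε : 0 < ε)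
    (hηδ : η * d δ ≤ ε)
    (h : ℝ → ℝ) (hh : ∀ z, h z = C * Real.exp (-η * d z)) :
    ∀ y : ℝ,
      (∫ x, h (y - x) ∂P) ≤ Real.exp ε * ∫ x', h (y - x') ∂Q ∧
      (∫ x', h (y - x') ∂Q) ≤ Real.exp ε * ∫ x, h (y - x) ∂P := by
  intro y
  have hh_meas : Measurable h := by
    have : h = fun z => C * Real.exp (-η * d z) := funext hh
    rw [this]
    exact (Measurable.const_mul ((hd_meas.const_mul (-η)).exp) C)
  have m1 : Measurable fun x : ℝ => h (y - x) := hh_meas.comp (by fun_prop)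
  have m2 : Measurable fun x : ℝ => h (y - x + δ) := hh_meas.comp (by fun_prop)
  -- Q integral equals ∫ h (y - x + δ) dP
  have hQint : (∫ x', h (y - x') ∂Q) = ∫ x, h (y - x + δ) ∂P := by
    rw [hQ, integral_map (by fun_prop) m1.aestronglyMeasurable]
    congr 1; funext x; ring_nf
  -- boundedness / integrability
  have hbound : ∀ z, h z ≤ C := by
    intro z
    rw [hh z]
    nlinarith [Real.exp_le_one_iff.mpr (by nlinarith [hd_nonneg z] : -η * d z ≤ 0), hC.le]
  have hpos : ∀ z, 0 < h z := by
    intro z; rw [hh z]; positivity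
  have hint1 : Integrable (fun x => h (y - x)) P := by
    apply Integrable.mono' (integrable_const C) m1.aestronglyMeasurable
    filter_upwards with x
    rw [Real.norm_eq_abs, abs_of_pos (hpos _)]
    exact hbound _
  have hint2 : Integrable (fun x => h (y - x + δ)) P := by
    apply Integrable.mono' (integrable_const C) m2.aestronglyMeasurable
    filter_upwards with x
    rw [Real.norm_eq_abs, abs_of_pos (hpos _)]
    exact hbound _
  -- pointwise inequalities
  have key : ∀ a b : ℝ, d b ≤ d δ + d a → h a ≤ Real.exp ε * h b := by
    intro a b hab
    rw [hh a, hh b]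
    rw [mul_comm (Real.exp ε), mul_assoc, ← Real.exp_add]
    apply mul_le_mul_of_nonneg_left _ hC.le
    apply Real.exp_le_exp.mpr
    nlinarith [mul_le_mul_of_nonneg_left hab hη.le]
  have ptw1 : ∀ x : ℝ, h (y - x) ≤ Real.exp ε * h (y - x + δ) := by
    intro x
    apply key
    calc d (y - x + δ) ≤ d δ + d (y - x + δ - δ) := hd_tri _ _
      _ = d δ + d (y - x) := by ring_nf
  have ptw2 : ∀ x : ℝ, h (y - x + δ) ≤ Real.exp ε * h (y - x) := by
    intro x
    apply key
    calc d (y - x) ≤ d (-δ) + d (y - x - -δ) := hd_tri _ _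
      _ = d δ + d (y - x + δ) := by rw [← hd_symm δ]; ring_nf
  constructor
  · rw [hQint, ← integral_const_mul]
    exact integral_mono hint1 (hint2.const_mul _) ptw1
  · rw [hQint, ← integral_const_mul]
    exact integral_mono hint2 (hint1.const_mul _) ptw2
end

section
/- Let ε ∈ (0, 1], δ ∈ (0, 1), and Δ > 0. Let P_i and P_j be probability measures on ℝ and let π be a coupling of P_i and P_j such that |x − x'| ≤ Δ for π-almost every pair (x, x'). Let θ ≥ (Δ/ε)·√(2·log(1.25/δ)), and for s ∈ {i, j} let Q_s be the law of X + N where X has law P_s and N is an independent centered Gaussian random variable with standard deviation θ (equivalently, Q_s(A) = ∫ γ_{x,θ²}(A) dP_s(x), where γ_{x,θ²} is the Gaussian measure on ℝ with mean x and variance θ²). Then for every Borel set A ⊆ ℝ, Q_i(A) ≤ exp(ε)·Q_j(A) + δ and Q_j(A) ≤ exp(ε)·Q_i(A) + δ. -/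
/-!
On `{x | (a - b) (x - (a + b) / 2) ≤ ε σ²}` the density of `N(a, σ²)` is at most `e^ε` times that
of `N(b, σ²)`, since their ratio is `exp ((a - b) (x - (a + b) / 2) / σ²)`. The complement is a
Gaussian tail, of mass at most `δ` as soon as `σ ≥ |a - b| √(2 log (1.25 / δ)) / ε`. Integrating
this pointwise bound along the coupling, whose pairs are `Δ`-close, gives the bound for the
mixtures `Q_i` and `Q_j`.
-/

open MeasureTheory ProbabilityTheory
open Real Set
open scoped NNReal ENNReal

namespace ProbabilityTheory

variable {v : ℝ≥0}

lemma gaussianPDFReal_eq_exp_mul (μ ν : ℝ) (v : ℝ≥0) (x : ℝ) :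
    gaussianPDFReal μ v x
      = exp ((μ - ν) * (x - (μ + ν) / 2) / v) * gaussianPDFReal ν v x := by
  simp only [gaussianPDFReal]
  rw [mul_left_comm, ← exp_add]
  congr 2
  ring

lemma gaussianPDFReal_le_inv_sqrt (μ x : ℝ) :
    gaussianPDFReal μ v x ≤ (√(2 * π * v))⁻¹ := by
  rw [gaussianPDFReal]
  refine mul_le_of_le_one_right (by positivity) (exp_le_one_iff.mpr ?_)
  exact div_nonpos_of_nonpos_of_nonneg (neg_nonpos.mpr (sq_nonneg _)) (by positivity)

lemma gaussianReal_le_exp_mul {μ ν r : ℝ} (hv : v ≠ 0) {s : Set ℝ}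
    (h : ∀ x ∈ s, (μ - ν) * (x - (μ + ν) / 2) ≤ r * v) :
    gaussianReal μ v s ≤ ENNReal.ofReal (exp r) * gaussianReal ν v s := by
  have hv' : (0 : ℝ) < v := by positivity
  rw [gaussianReal_apply _ hv, gaussianReal_apply _ hv,
    ← lintegral_const_mul _ (measurable_gaussianPDF _ _)]
  refine setLIntegral_mono ((measurable_gaussianPDF _ _).const_mul _) fun x hx => ?_
  rw [gaussianPDF, gaussianPDF, ← ENNReal.ofReal_mul (exp_nonneg _),
    gaussianPDFReal_eq_exp_mul μ ν]
  gcongr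
  · exact gaussianPDFReal_nonneg _ _ _
  · rw [div_le_iff₀ hv']
    exact h x hx

lemma gaussianReal_Ioc_le (μ : ℝ) (hv : v ≠ 0) (a b : ℝ) :
    gaussianReal μ v (Ioc a b) ≤ ENNReal.ofReal ((b - a) / √(2 * π * v)) := by
  rw [gaussianReal_apply _ hv]
  calc ∫⁻ x in Ioc a b, gaussianPDF μ v x
      ≤ ∫⁻ _ in Ioc a b, ENNReal.ofReal (√(2 * π * v))⁻¹ :=
        setLIntegral_mono measurable_const fun x _ =>
          ENNReal.ofReal_le_ofReal (gaussianPDFReal_le_inv_sqrt _ _)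
    _ = ENNReal.ofReal ((b - a) / √(2 * π * v)) := by
        rw [setLIntegral_const, Real.volume_Ioc, ← ENNReal.ofReal_mul (by positivity),
          div_eq_inv_mul]

lemma gaussianReal_Ici_self (μ : ℝ) (hv : v ≠ 0) : gaussianReal μ v (Ici μ) = 2⁻¹ := by
  have := nullSingletonClass_gaussianReal (μ := μ) hv
  have hsymm : gaussianReal μ v (Iic μ) = gaussianReal μ v (Ici μ) := by
    have hrefl : (gaussianReal μ v).map (2 * μ - ·) = gaussianReal μ v := by
      rw [gaussianReal_map_const_sub, two_mul, add_sub_cancel_right]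
    conv_lhs => rw [← hrefl, Measure.map_apply (by fun_prop) measurableSet_Iic]
    congr 1
    ext x
    change 2 * μ - x ≤ μ ↔ μ ≤ x
    constructor <;> intro <;> linarith
  apply ENNReal.eq_inv_of_mul_eq_one_left
  rw [mul_two]
  nth_rewrite 1 [← hsymm]
  rw [← measure_congr (Ioi_ae_eq_Ici (μ := gaussianReal μ v)), ← compl_Iic,
    measure_add_measure_compl measurableSet_Iic, measure_univ]

lemma gaussianReal_Ici_le_exp (hv : v ≠ 0) {t : ℝ} (ht : 0 ≤ t) :
    gaussianReal 0 v (Ici t) ≤ ENNReal.ofReal (exp (-t ^ 2 / (2 * v)) / 2) := by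
  have hv' : (v : ℝ) ≠ 0 := by positivity
  calc gaussianReal 0 v (Ici t)
      ≤ ENNReal.ofReal (exp (-t ^ 2 / (2 * v))) * gaussianReal t v (Ici t) := by
        refine gaussianReal_le_exp_mul hv fun x (hx : t ≤ x) => ?_
        rw [div_mul_eq_mul_div, mul_div_mul_right _ _ hv']
        nlinarith [mul_nonneg ht (sub_nonneg.2 hx)]
    _ = ENNReal.ofReal (exp (-t ^ 2 / (2 * v)) / 2) := by
        rw [gaussianReal_Ici_self t hv, ENNReal.ofReal_div_of_pos two_pos, ENNReal.ofReal_ofNat]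
        exact (div_eq_mul_inv _ _).symm

lemma gaussianReal_Ioi_le (hv : v ≠ 0) {c t : ℝ} (hc0 : 0 < c) (hc : 2 / 5 ≤ c ^ 2)
    (ht : (c ^ 2 - 1 / 2) * √v ≤ c * t) :
    gaussianReal 0 v (Ioi t) ≤ ENNReal.ofReal (5 / 4 * exp (-c ^ 2 / 2)) := by
  have hv' : (0 : ℝ) < v := by positivity
  have hsqrt : 0 < √(v : ℝ) := sqrt_pos.2 hv'
  have hsq : √(v : ℝ) ^ 2 = v := sq_sqrt hv'.le
  rcases le_or_gt 0 t with ht0 | ht0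
  · have hvt : (c ^ 2 - 1) * v ≤ t ^ 2 := by
      rcases le_or_gt (c ^ 2) 1 with hc1 | hc1
      · nlinarith
      · have hct := pow_le_pow_left₀ (mul_nonneg (by linarith) hsqrt.le) ht 2
        rw [mul_pow, mul_pow, hsq] at hct
        have : c ^ 2 * ((c ^ 2 - 1) * v) ≤ c ^ 2 * t ^ 2 := by nlinarith
        exact le_of_mul_le_mul_left this (by positivity)
    have hexp : exp (-t ^ 2 / (2 * v)) ≤ exp (1 / 2) * exp (-c ^ 2 / 2) := by
      rw [← exp_add, exp_le_exp, div_le_iff₀ (by positivity)]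
      nlinarith
    have hhalf : exp (1 / 2) < 2 :=
      (exp_bound_div_one_sub_of_interval' (by norm_num) (by norm_num)).trans_eq (by norm_num)
    calc gaussianReal 0 v (Ioi t) ≤ gaussianReal 0 v (Ici t) := measure_mono Ioi_subset_Ici_self
      _ ≤ ENNReal.ofReal (exp (-t ^ 2 / (2 * v)) / 2) := gaussianReal_Ici_le_exp hv ht0
      _ ≤ ENNReal.ofReal (5 / 4 * exp (-c ^ 2 / 2)) := by
        gcongr
        nlinarith [exp_pos (-c ^ 2 / 2)]
  -- Here `c ^ 2 < 1 / 2`, so the target is at least `15 / 16` and a crude strip bound suffices.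
  · have hct : c * -t ≤ √v / 2 := by nlinarith
    have hpi : 3 ≤ 2 * c * √(2 * π) := by
      have h2π : √(2 * π) ^ 2 = 2 * π := sq_sqrt (by positivity)
      nlinarith [pi_gt_three, sqrt_nonneg (2 * π)]
    have hstrip : -t / √(2 * π * v) ≤ 1 / 3 := by
      rw [sqrt_mul (by positivity), div_le_iff₀ (by positivity)]
      nlinarith [sqrt_nonneg (2 * π)]
    have hcexp : 3 / 4 ≤ exp (-c ^ 2 / 2) := by
      nlinarith [add_one_le_exp (-c ^ 2 / 2)]
    calc gaussianReal 0 v (Ioi t) ≤ gaussianReal 0 v (Ioc t 0 ∪ Ici 0) :=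
          measure_mono fun x (hx : t < x) => (le_or_gt x 0).imp (⟨hx, ·⟩) le_of_lt
      _ ≤ gaussianReal 0 v (Ioc t 0) + gaussianReal 0 v (Ici 0) := measure_union_le _ _
      _ ≤ ENNReal.ofReal (-t / √(2 * π * v)) + ENNReal.ofReal (1 / 2) := by
          rw [gaussianReal_Ici_self 0 hv, one_div, ENNReal.ofReal_inv_of_pos two_pos,
            ENNReal.ofReal_ofNat]
          gcongr
          simpa only [zero_sub] using gaussianReal_Ioc_le 0 hv t 0
      _ ≤ ENNReal.ofReal (5 / 4 * exp (-c ^ 2 / 2)) := by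
          rw [← ENNReal.ofReal_add (div_nonneg (by linarith) (sqrt_nonneg _)) (by norm_num)]
          gcongr
          linarith

lemma gaussianReal_setOf_lt_mul (a b r : ℝ) :
    gaussianReal a v {x | r < (a - b) * (x - (a + b) / 2)}
      = gaussianReal 0 (.mk ((a - b) ^ 2) (sq_nonneg _) * v) (Ioi (r - (a - b) ^ 2 / 2)) := by
  have hmap : ((gaussianReal a v).map (· - a)).map ((a - b) * ·)
      = gaussianReal 0 (.mk ((a - b) ^ 2) (sq_nonneg _) * v) := by
    rw [gaussianReal_map_sub_const, gaussianReal_map_const_mul, sub_self, mul_zero]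
  rw [← hmap, Measure.map_apply (by fun_prop) measurableSet_Ioi,
    Measure.map_apply (by fun_prop) (measurableSet_Ioi.preimage (by fun_prop))]
  congr 1
  ext x
  simp only [mem_ofPred_eq, mem_preimage, mem_Ioi]
  constructor <;> intro <;> nlinarith

theorem gaussianReal_le_exp_mul_add {ε δ σ a b : ℝ} (hε : 0 < ε) (hε1 : ε ≤ 1) (hδ0 : 0 < δ)
    (hδ1 : δ < 1) (hσ : |a - b| / ε * √(2 * log (1.25 / δ)) ≤ σ) (A : Set ℝ) :
    gaussianReal a (σ ^ 2).toNNReal A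
      ≤ ENNReal.ofReal (exp ε) * gaussianReal b (σ ^ 2).toNNReal A + ENNReal.ofReal δ := by
  rcases eq_or_ne a b with rfl | hab
  · refine le_add_right (le_mul_of_one_le_left' ?_)
    exact ENNReal.one_le_ofReal.2 (one_le_exp hε.le)
  set c := √(2 * log (1.25 / δ))
  have hlog : 1 / 5 < log (1.25 / δ) := by
    refine lt_of_lt_of_le ?_ (one_sub_inv_le_log_of_pos (by positivity))
    rw [inv_div]
    linarith [show δ / 1.25 = 4 / 5 * δ by norm_num; ring]
  have hc2 : c ^ 2 = 2 * log (1.25 / δ) := sq_sqrt (by linarith)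
  have hc0 : 0 < c := sqrt_pos.2 (by linarith)
  have hδc : 5 / 4 * exp (-c ^ 2 / 2) = δ := by
    rw [hc2, neg_div, mul_div_cancel_left₀ _ two_ne_zero, exp_neg, exp_log (by positivity)]
    field_simp
    norm_num
  set d := |a - b|
  have hd : 0 < d := abs_pos.2 (sub_ne_zero.2 hab)
  have hσ0 : 0 < σ := lt_of_lt_of_le (by positivity) hσ
  have hdc : d * c ≤ ε * σ := by
    rwa [div_mul_eq_mul_div, div_le_iff₀ hε, mul_comm σ] at hσ
  set v := (σ ^ 2).toNNReal
  have hv : (v : ℝ) = σ ^ 2 := coe_toNNReal _ (sq_nonneg σ)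
  have hv0 : v ≠ 0 := by positivity
  have hsqrt : √((.mk ((a - b) ^ 2) (sq_nonneg _) * v : ℝ≥0) : ℝ) = d * σ := by
    rw [NNReal.coe_mul, NNReal.coe_mk, hv, ← sq_abs, ← mul_pow, sqrt_sq (by positivity)]
  have hw : (.mk ((a - b) ^ 2) (sq_nonneg _) * v : ℝ≥0) ≠ 0 := fun h => by
    rw [h, NNReal.coe_zero, sqrt_zero] at hsqrt
    exact (mul_pos hd hσ0).ne hsqrt
  set S := {x | (a - b) * (x - (a + b) / 2) ≤ ε * v}
  calc gaussianReal a v A ≤ gaussianReal a v (A ∩ S) + gaussianReal a v (A \ S) :=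
        measure_le_inter_add_sdiff _ _ _
    _ ≤ ENNReal.ofReal (exp ε) * gaussianReal b v A + ENNReal.ofReal δ := by
        gcongr
        · exact (gaussianReal_le_exp_mul hv0 fun x hx => hx.2).trans
            (by gcongr; exact inter_subset_left)
        · calc gaussianReal a v (A \ S)
              ≤ gaussianReal a v {x | ε * v < (a - b) * (x - (a + b) / 2)} :=
                measure_mono fun x hx => by simpa [S] using hx.2
            _ ≤ ENNReal.ofReal δ := by
                rw [gaussianReal_setOf_lt_mul, ← hδc]
                refine gaussianReal_Ioi_le hw hc0 (by linarith) ?_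
                rw [hsqrt, hv, ← sq_abs (a - b)]
                nlinarith [mul_le_mul_of_nonneg_left hdc (by positivity : 0 ≤ c * σ),
                  mul_le_mul_of_nonneg_left (hdc.trans (mul_le_of_le_one_left hσ0.le hε1)) hd.le]

end ProbabilityTheory

namespace MeasureTheory.Measure

lemma bind_map_apply_le_mul_add {γ α β : Type*} [MeasurableSpace γ] [MeasurableSpace α]
    [MeasurableSpace β] {μ : Measure γ} [IsProbabilityMeasure μ] {f g : γ → α}
    (hf : Measurable f) (hg : Measurable g) {κ : α → Measure β} (hκ : Measurable κ)
    {A : Set β} (hA : MeasurableSet A) {c δ : ℝ≥0∞}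
    (h : ∀ᵐ z ∂μ, κ (f z) A ≤ c * κ (g z) A + δ) :
    (μ.map f).bind κ A ≤ c * (μ.map g).bind κ A + δ := by
  have hκA : Measurable fun x => κ x A := measurable_coe hA |>.comp hκ
  rw [bind_apply hA hκ.aemeasurable, bind_apply hA hκ.aemeasurable, lintegral_map hκA hf,
    lintegral_map hκA hg]
  calc ∫⁻ z, κ (f z) A ∂μ ≤ ∫⁻ z, c * κ (g z) A + δ ∂μ := lintegral_mono_ae h
    _ = c * ∫⁻ z, κ (g z) A ∂μ + δ := by
      rw [lintegral_add_right _ measurable_const, lintegral_const, measure_univ, mul_one,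
        lintegral_const_mul (f := fun z => κ (g z) A) c (hκA.comp hg)]

end MeasureTheory.Measure

theorem gaussian_mechanism_pufferfish_highPrivacy_general
    (ε δ Δ : ℝ) (hε : 0 < ε) (hε1 : ε ≤ 1) (hδ0 : 0 < δ) (hδ1 : δ < 1)
    (Pi Pj : Measure ℝ)
    (μc : Measure (ℝ × ℝ)) [IsProbabilityMeasure μc]
    (hfst : μc.map Prod.fst = Pi) (hsnd : μc.map Prod.snd = Pj)
    (hsupp : ∀ᵐ p ∂μc, |p.1 - p.2| ≤ Δ)
    (θ : ℝ) (hθ : θ ≥ (Δ / ε) * Real.sqrt (2 * Real.log (1.25 / δ)))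
    (Qi Qj : Measure ℝ)
    (hQi : Qi = Pi.bind (fun x => gaussianReal x (Real.toNNReal (θ ^ 2))))
    (hQj : Qj = Pj.bind (fun x => gaussianReal x (Real.toNNReal (θ ^ 2)))) :
    ∀ A : Set ℝ, MeasurableSet A →
      Qi A ≤ ENNReal.ofReal (Real.exp ε) * Qj A + ENNReal.ofReal δ ∧
      Qj A ≤ ENNReal.ofReal (Real.exp ε) * Qi A + ENNReal.ofReal δ := by
  intro A hA
  subst hQi hQj hfst hsnd
  have hκ : Measurable fun x : ℝ => gaussianReal x (θ ^ 2).toNNReal := by fun_prop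
  have hclose {x y : ℝ} (hxy : |x - y| ≤ Δ) :
      gaussianReal x (θ ^ 2).toNNReal A
        ≤ ENNReal.ofReal (exp ε) * gaussianReal y (θ ^ 2).toNNReal A + ENNReal.ofReal δ :=
    gaussianReal_le_exp_mul_add hε hε1 hδ0 hδ1 (le_trans (by gcongr) hθ) A
  exact ⟨Measure.bind_map_apply_le_mul_add measurable_fst measurable_snd hκ hA
      (hsupp.mono fun p hp => hclose hp),
    Measure.bind_map_apply_le_mul_add measurable_snd measurable_fst hκ hA
      (hsupp.mono fun p hp => hclose (abs_sub_comm p.1 p.2 ▸ hp))⟩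

/-- Theorem 3(a) — the Gaussian mechanism with standard deviation
`θ ≥ (Δ/ε)·√(2 log(1.25/δ))`, for `ε ≤ 1`, attains the δ-approximation of
ε-pufferfish privacy, given a coupling supported on pairs at distance ≤ Δ. -/
theorem gaussian_mechanism_pufferfish_highPrivacy
    (ε δ Δ : ℝ) (hε : 0 < ε) (hε1 : ε ≤ 1) (hδ0 : 0 < δ) (hδ1 : δ < 1) (hΔ : 0 < Δ)
    (Pi Pj : Measure ℝ) [IsProbabilityMeasure Pi] [IsProbabilityMeasure Pj]
    (μc : Measure (ℝ × ℝ)) [IsProbabilityMeasure μc]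
    (hfst : μc.map Prod.fst = Pi) (hsnd : μc.map Prod.snd = Pj)
    (hsupp : ∀ᵐ p ∂μc, |p.1 - p.2| ≤ Δ)
    (θ : ℝ) (hθ : θ ≥ (Δ / ε) * Real.sqrt (2 * Real.log (1.25 / δ)))
    (Qi Qj : Measure ℝ)
    (hQi : Qi = Pi.bind (fun x => gaussianReal x (Real.toNNReal (θ ^ 2))))
    (hQj : Qj = Pj.bind (fun x => gaussianReal x (Real.toNNReal (θ ^ 2)))) :
    ∀ A : Set ℝ, MeasurableSet A →
      Qi A ≤ ENNReal.ofReal (Real.exp ε) * Qj A + ENNReal.ofReal δ ∧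
      Qj A ≤ ENNReal.ofReal (Real.exp ε) * Qi A + ENNReal.ofReal δ :=
  gaussian_mechanism_pufferfish_highPrivacy_general ε δ Δ hε hε1 hδ0 hδ1 Pi Pj μc hfst hsnd hsupp θ
    hθ Qi Qj hQi hQj
end

section
/- Let ε > 0, δ ∈ (0, 1), and Δ > 0. Let P_i and P_j be probability measures on ℝ and let π be a coupling of P_i and P_j such that |x − x'| ≤ Δ for π-almost every pair (x, x'). Let c > 0.42·δ^(−1/3) + √((0.42·δ^(−1/3))² + ε/2) and θ = (Δ/ε)·c, and for s ∈ {i, j} let Q_s be the law of X + N where X has law P_s and N is an independent centered Gaussian random variable with standard deviation θ. Then for every Borel set A ⊆ ℝ, Q_i(A) ≤ exp(ε)·Q_j(A) + δ and Q_j(A) ≤ exp(ε)·Q_i(A) + δ. -/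
open MeasureTheory ProbabilityTheory
open Real Set Filter Topology
open scoped NNReal ENNReal

/-!
Through the coupling it suffices to compare two Gaussians `N(x, θ²)` and `N(x', θ²)` with
`|x - x'| ≤ Δ`. Their density ratio exceeds `e^ε` only on a half-line at distance
`θ²ε/Δ - Δ/2 = kθ` from `x`, where `k = c - ε/(2c)`; the condition on `c` is exactly
`k > 0.84 δ^(-1/3)`, and Mills' inequality `P(N(0,1) > k) ≤ φ(k)/k` then bounds the mass of that
half-line by `δ`.
-/

theorem MeasureTheory.withDensity_apply_le_mul_add {α : Type*} [MeasurableSpace α]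
    (ρ : Measure α) [SFinite ρ] {f g : α → ℝ≥0∞} (hg : Measurable g) (C : ℝ≥0∞) (A : Set α) :
    ρ.withDensity f A ≤ C * ρ.withDensity g A + ρ.withDensity f {x | C * g x < f x} := by
  set G := {x | f x ≤ C * g x}
  have hgood : ρ.withDensity f (A ∩ G) ≤ C * ρ.withDensity g A := by
    rw [withDensity_apply' _, withDensity_apply' _]
    calc ∫⁻ x in A ∩ G, f x ∂ρ ≤ ∫⁻ x in A ∩ G, C * g x ∂ρ :=
          setLIntegral_mono (hg.const_mul C) fun x hx ↦ hx.2
      _ = C * ∫⁻ x in A ∩ G, g x ∂ρ := lintegral_const_mul C hg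
      _ ≤ C * ∫⁻ x in A, g x ∂ρ := by gcongr; exact inter_subset_left
  have hbad : A \ G ⊆ {x | C * g x < f x} := fun x hx ↦ (not_le.mp hx.2 : C * g x < f x)
  calc ρ.withDensity f A ≤ ρ.withDensity f (A ∩ G) + ρ.withDensity f (A \ G) :=
        measure_le_inter_add_sdiff _ _ _
    _ ≤ _ := add_le_add hgood (measure_mono hbad)

theorem MeasureTheory.Measure.bind_map_apply_le {γ α β : Type*} [MeasurableSpace γ]
    [MeasurableSpace α] [MeasurableSpace β] {P : Measure γ} [IsProbabilityMeasure P]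
    {f g : γ → α} (hf : Measurable f) (hg : Measurable g) {κ : α → Measure β}
    (hκ : Measurable κ) {A : Set β} (hA : MeasurableSet A) {C d : ℝ≥0∞}
    (h : ∀ᵐ p ∂P, κ (f p) A ≤ C * κ (g p) A + d) :
    (P.map f).bind κ A ≤ C * (P.map g).bind κ A + d := by
  have hκA : Measurable fun x ↦ κ x A := (Measure.measurable_coe hA).comp hκ
  rw [Measure.bind_apply hA hκ.aemeasurable, Measure.bind_apply hA hκ.aemeasurable,
    lintegral_map hκA hf, lintegral_map hκA hg]
  calc ∫⁻ p, κ (f p) A ∂P ≤ ∫⁻ p, (C * κ (g p) A + d) ∂P := lintegral_mono_ae h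
    _ = C * ∫⁻ p, κ (g p) A ∂P + d := by
      rw [lintegral_add_right _ measurable_const, lintegral_const, measure_univ, mul_one,
        lintegral_const_mul C (f := fun p ↦ κ (g p) A) (hκA.comp hg)]

theorem ProbabilityTheory.hasDerivAt_gaussianPDFReal (μ : ℝ) (v : ℝ≥0) (x : ℝ) :
    HasDerivAt (gaussianPDFReal μ v) (-((x - μ) / v) * gaussianPDFReal μ v x) x := by
  have hexponent : HasDerivAt (fun y ↦ -(y - μ) ^ 2 / (2 * v)) (-((x - μ) / v)) x := by
    refine ((((hasDerivAt_id x).sub_const μ).pow 2).neg.div_const _).congr_deriv ?_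
    by_cases hv : (v : ℝ) = 0
    · simp [hv]
    · field_simp
      simp
  rw [gaussianPDFReal_def]
  exact (hexponent.exp.const_mul _).congr_deriv (by ring)

theorem ProbabilityTheory.tendsto_gaussianPDFReal_atTop (μ : ℝ) (v : ℝ≥0) :
    Tendsto (gaussianPDFReal μ v) atTop (𝓝 0) := by
  by_cases hv : v = 0
  · rw [hv, gaussianPDFReal_zero_var]
    exact tendsto_const_nhds
  have hsq : Tendsto (fun y : ℝ ↦ (y - μ) ^ 2 / (2 * v)) atTop atTop :=
    ((tendsto_pow_atTop two_ne_zero).comp (tendsto_atTop_add_const_right _ (-μ) tendsto_id)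
      |>.congr fun y ↦ by simp [sub_eq_add_neg]).atTop_div_const (by positivity)
  have hexp : Tendsto (fun y : ℝ ↦ -(y - μ) ^ 2 / (2 * v)) atTop atBot :=
    (tendsto_neg_atTop_atBot.comp hsq).congr fun y ↦ by simp [neg_div]
  rw [gaussianPDFReal_def]
  simpa using (tendsto_exp_atBot.comp hexp).const_mul (√(2 * π * v))⁻¹

theorem ProbabilityTheory.gaussianReal_Ioi_le_s10 {v : ℝ≥0} (hv : v ≠ 0) {τ : ℝ} (hτ : 0 < τ) :
    gaussianReal 0 v (Ioi τ) ≤ ENNReal.ofReal (v / τ * gaussianPDFReal 0 v τ) := by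
  have hderiv : ∀ s ∈ Ici τ, HasDerivAt (fun s ↦ -(v * gaussianPDFReal 0 v s))
      (s * gaussianPDFReal 0 v s) s := fun s _ ↦ by
    refine ((hasDerivAt_gaussianPDFReal 0 v s).const_mul (v : ℝ)).neg.congr_deriv ?_
    field_simp
    ring
  have hpos : ∀ s ∈ Ioi τ, 0 ≤ s * gaussianPDFReal 0 v s := fun s hs ↦
    mul_nonneg (hτ.trans hs).le (gaussianPDFReal_nonneg _ _ _)
  have hlim : Tendsto (fun s ↦ -(v * gaussianPDFReal 0 v s)) atTop (𝓝 0) := by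
    simpa using ((tendsto_gaussianPDFReal_atTop 0 v).const_mul (v : ℝ)).neg
  have hfirst : ∫ s in Ioi τ, s * gaussianPDFReal 0 v s = v * gaussianPDFReal 0 v τ := by
    rw [integral_Ioi_of_hasDerivAt_of_nonneg' hderiv hpos hlim]
    ring
  rw [gaussianReal_apply_eq_integral _ hv]
  refine ENNReal.ofReal_le_ofReal ?_
  calc ∫ s in Ioi τ, gaussianPDFReal 0 v s ≤ ∫ s in Ioi τ, τ⁻¹ * (s * gaussianPDFReal 0 v s) := by
        refine setIntegral_mono_on (integrable_gaussianPDFReal 0 v).integrableOn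
          ((integrableOn_Ioi_deriv_of_nonneg' hderiv hpos hlim).const_mul _) measurableSet_Ioi
          fun s hs ↦ ?_
        rw [← mul_assoc]
        exact le_mul_of_one_le_left (gaussianPDFReal_nonneg _ _ _)
          ((one_le_inv_mul₀ hτ).mpr (le_of_lt hs))
    _ = v / τ * gaussianPDFReal 0 v τ := by
        rw [integral_const_mul, hfirst]
        ring

theorem ProbabilityTheory.gaussianReal_Ioi_mul_le {σ k : ℝ} (hσ : 0 < σ) (hk : 0 < k) :
    gaussianReal 0 (σ ^ 2).toNNReal (Ioi (k * σ))
      ≤ ENNReal.ofReal (exp (-k ^ 2 / 2) / (√(2 * π) * k)) := by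
  have hv : (σ ^ 2).toNNReal ≠ 0 := (Real.toNNReal_pos.mpr (by positivity)).ne'
  refine (gaussianReal_Ioi_le_s10 hv (by positivity)).trans_eq (congrArg _ ?_)
  have hexponent : -(k * σ - 0) ^ 2 / (2 * σ ^ 2) = -k ^ 2 / 2 := by field_simp; ring
  rw [gaussianPDFReal, coe_toNNReal _ (sq_nonneg σ), hexponent, sqrt_mul' _ (sq_nonneg σ),
    sqrt_sq hσ.le]
  field_simp

theorem ProbabilityTheory.exp_mul_gaussianPDFReal_lt_iff {v : ℝ≥0} (hv : v ≠ 0) (ε x x' t : ℝ) :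
    exp ε * gaussianPDFReal x' v t < gaussianPDFReal x v t ↔
      2 * (v * ε) < (x - x') * (2 * (t - x) + (x - x')) := by
  simp only [gaussianPDFReal]
  have hdiff : -(t - x) ^ 2 / (2 * v) - (ε + -(t - x') ^ 2 / (2 * v))
      = ((x - x') * (2 * (t - x) + (x - x')) - 2 * (v * ε)) / (2 * v) := by
    field_simp; ring
  rw [mul_left_comm, mul_lt_mul_iff_of_pos_left (by positivity), ← exp_add, exp_lt_exp, ← sub_pos,
    hdiff, div_pos_iff_of_pos_right (by positivity), sub_pos]

theorem lt_of_two_mul_lt_mul_two_mul_add {a Δ w s : ℝ} (ha : 0 ≤ a) (haΔ : a ≤ Δ) (hΔ : 0 < Δ)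
    (hw : Δ ^ 2 < 2 * w) (h : 2 * w < a * (2 * s + a)) : w / Δ - Δ / 2 < s := by
  have hs : 0 < s := by
    by_contra! hs
    nlinarith [mul_nonpos_of_nonneg_of_nonpos ha hs]
  rw [sub_lt_iff_lt_add, div_lt_iff₀ hΔ]
  nlinarith [mul_le_mul_of_nonneg_right haΔ (by positivity : 0 ≤ 2 * s + a)]

theorem ProbabilityTheory.gaussianReal_setOf_lt_le {v : ℝ≥0} {x x' Δ w : ℝ}
    (hxx' : |x - x'| ≤ Δ) (hΔ : 0 < Δ) (hw : Δ ^ 2 < 2 * w) :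
    gaussianReal x v {t | 2 * w < (x - x') * (2 * (t - x) + (x - x'))}
      ≤ gaussianReal 0 v (Ioi (w / Δ - Δ / 2)) := by
  set a := x - x'
  have hshift : gaussianReal x v {t | 2 * w < a * (2 * (t - x) + a)}
      = gaussianReal 0 v {s | 2 * w < a * (2 * s + a)} := by
    rw [show gaussianReal x v = (gaussianReal 0 v).map (· + x) by
        rw [gaussianReal_map_add_const, zero_add],
      Measure.map_apply (measurable_add_const x) (measurableSet_lt measurable_const (by fun_prop))]
    simp only [preimage_ofPred_eq, add_sub_cancel_right]
  rw [hshift]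
  rcases le_total 0 a with ha | ha
  · exact measure_mono fun s hs ↦ lt_of_two_mul_lt_mul_two_mul_add ha (le_of_abs_le hxx') hΔ hw hs
  · calc gaussianReal 0 v {s | 2 * w < a * (2 * s + a)}
        ≤ gaussianReal 0 v ((fun s ↦ -s) ⁻¹' Ioi (w / Δ - Δ / 2)) := by
          refine measure_mono fun s (hs : 2 * w < a * (2 * s + a)) ↦ ?_
          refine lt_of_two_mul_lt_mul_two_mul_add (neg_nonneg.mpr ha)
            (neg_le.mpr (abs_le.mp hxx').1) hΔ hw ?_
          linarith
      _ ≤ (gaussianReal 0 v).map (fun s ↦ -s) (Ioi (w / Δ - Δ / 2)) :=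
          Measure.le_map_apply measurable_neg.aemeasurable _
      _ = gaussianReal 0 v (Ioi (w / Δ - Δ / 2)) := by rw [gaussianReal_map_neg, neg_zero]

theorem ProbabilityTheory.gaussianReal_apply_le_exp_mul_add {v : ℝ≥0} (hv : v ≠ 0) {ε Δ x x' : ℝ}
    (hxx' : |x - x'| ≤ Δ) (hΔ : 0 < Δ) (hvε : Δ ^ 2 < 2 * (v * ε)) (A : Set ℝ) :
    gaussianReal x v A ≤ ENNReal.ofReal (exp ε) * gaussianReal x' v A
      + gaussianReal 0 v (Ioi (v * ε / Δ - Δ / 2)) := by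
  rw [gaussianReal_of_var_ne_zero x hv, gaussianReal_of_var_ne_zero x' hv]
  refine (withDensity_apply_le_mul_add volume (measurable_gaussianPDF x' v) _ A).trans
    (add_le_add le_rfl ?_)
  rw [← gaussianReal_of_var_ne_zero x hv]
  refine le_trans (measure_mono fun t ht ↦ ?_) (gaussianReal_setOf_lt_le hxx' hΔ hvε)
  rw [mem_ofPred_eq, gaussianPDF, gaussianPDF, ← ENNReal.ofReal_mul (exp_pos ε).le,
    ENNReal.ofReal_lt_ofReal_iff (gaussianPDFReal_pos _ _ _ hv)] at ht
  exact (exp_mul_gaussianPDFReal_lt_iff hv ε x x' t).mp ht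

theorem two_mul_lt_sub_div_of_add_sqrt_lt {b c ε : ℝ} (hε : 0 < ε)
    (hc : b + √(b ^ 2 + ε / 2) < c) : 0 < c ∧ 2 * b < c - ε / (2 * c) := by
  have hr := sq_sqrt (by positivity : 0 ≤ b ^ 2 + ε / 2)
  have hr0 := sqrt_nonneg (b ^ 2 + ε / 2)
  have hquad : ε / 2 < c ^ 2 - 2 * b * c := by nlinarith
  have hc0 : 0 < c := by
    by_contra! hc0
    nlinarith [sqrt_le_sqrt (by linarith : b ^ 2 ≤ b ^ 2 + ε / 2), sqrt_sq_eq_abs b, neg_abs_le b]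
  refine ⟨hc0, ?_⟩
  rw [lt_sub_iff_add_lt, ← lt_sub_iff_add_lt', div_lt_iff₀ (by positivity)]
  linarith

theorem exp_neg_sq_div_two_div_le {δ k : ℝ} (hδ : 0 < δ) (hk : 0.84 * δ ^ (-(1 : ℝ) / 3) ≤ k) :
    exp (-k ^ 2 / 2) / (√(2 * π) * k) ≤ δ := by
  have hk0 : 0 < k := lt_of_lt_of_le (by positivity) hk
  -- `x ≤ e^(x-1)` at `x = k²/2` gives `e^(-k²/2) k² ≤ 2/e`, and `2/(e √(2π)) < 0.84³`
  have hexp : exp (-k ^ 2 / 2) * k ^ 2 ≤ 0.75 := by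
    have h := add_one_le_exp (k ^ 2 / 2 - 1)
    have he : 2.7 < exp 1 := by linarith [exp_one_gt_d9]
    calc exp (-k ^ 2 / 2) * k ^ 2 ≤ exp (-k ^ 2 / 2) * (2 * exp (k ^ 2 / 2 - 1)) := by
          gcongr; linarith
      _ = 2 / exp 1 := by
          rw [mul_left_comm, ← exp_add, show -k ^ 2 / 2 + (k ^ 2 / 2 - 1) = -1 by ring, exp_neg]
          ring
      _ ≤ 0.75 := by rw [div_le_iff₀ (exp_pos 1)]; linarith
  have hcube : 0.84 ^ 3 ≤ δ * k ^ 3 := by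
    have hpow : (δ ^ (-(1 : ℝ) / 3)) ^ 3 = δ⁻¹ := by
      rw [← rpow_natCast, ← rpow_mul hδ.le]
      norm_num [rpow_neg_one]
    calc (0.84 : ℝ) ^ 3 = δ * (0.84 * δ ^ (-(1 : ℝ) / 3)) ^ 3 := by
          rw [mul_pow, hpow]; field_simp
      _ ≤ δ * k ^ 3 := by gcongr
  have hsqrt : 2.5 ≤ √(2 * π) := le_sqrt_of_sq_le (by nlinarith [pi_gt_d2])
  rw [div_le_iff₀ (by positivity)]
  refine le_of_mul_le_mul_right ?_ (by positivity : 0 < k ^ 2)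
  nlinarith [mul_le_mul hsqrt hcube (by norm_num) (by positivity)]

theorem gaussian_mechanism_pufferfish_general_general
    (ε δ Δ : ℝ) (hε : 0 < ε) (hδ0 : 0 < δ) (hΔ : 0 < Δ)
    (Pi Pj : Measure ℝ)
    (μc : Measure (ℝ × ℝ)) [IsProbabilityMeasure μc]
    (hfst : μc.map Prod.fst = Pi) (hsnd : μc.map Prod.snd = Pj)
    (hsupp : ∀ᵐ p ∂μc, |p.1 - p.2| ≤ Δ)
    (c : ℝ)
    (hc : c > 0.42 * δ ^ (-(1 : ℝ) / 3) +
      Real.sqrt ((0.42 * δ ^ (-(1 : ℝ) / 3)) ^ 2 + ε / 2))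
    (θ : ℝ) (hθ : θ = (Δ / ε) * c)
    (Qi Qj : Measure ℝ)
    (hQi : Qi = Pi.bind (fun x => gaussianReal x (Real.toNNReal (θ ^ 2))))
    (hQj : Qj = Pj.bind (fun x => gaussianReal x (Real.toNNReal (θ ^ 2)))) :
    ∀ A : Set ℝ, MeasurableSet A →
      Qi A ≤ ENNReal.ofReal (Real.exp ε) * Qj A + ENNReal.ofReal δ ∧
      Qj A ≤ ENNReal.ofReal (Real.exp ε) * Qi A + ENNReal.ofReal δ := by
  intro A hA
  obtain ⟨hc0, hk⟩ := two_mul_lt_sub_div_of_add_sqrt_lt hε hc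
  set k := c - ε / (2 * c)
  have hk0 : 0 < k := lt_of_le_of_lt (by positivity) hk
  have hθ0 : 0 < θ := by rw [hθ]; positivity
  set v := (θ ^ 2).toNNReal
  have hv : v ≠ 0 := (Real.toNNReal_pos.mpr (by positivity)).ne'
  -- `θ = Δc/ε` turns the tail threshold `θ²ε/Δ - Δ/2` into `kθ`
  have hτ : v * ε / Δ - Δ / 2 = k * θ := by
    rw [coe_toNNReal _ (sq_nonneg θ), hθ, show k = c - ε / (2 * c) from rfl]
    field_simp
  have hvε : Δ ^ 2 < 2 * (v * ε) := by
    have : Δ / 2 < v * ε / Δ := by nlinarith [mul_pos hk0 hθ0]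
    rw [lt_div_iff₀ hΔ] at this; linarith
  have htail : gaussianReal 0 v (Ioi (v * ε / Δ - Δ / 2)) ≤ ENNReal.ofReal δ := by
    rw [hτ]
    refine (gaussianReal_Ioi_mul_le hθ0 hk0).trans (ENNReal.ofReal_le_ofReal ?_)
    exact exp_neg_sq_div_two_div_le hδ0 (by linarith)
  have hpoint : ∀ p : ℝ × ℝ, |p.1 - p.2| ≤ Δ →
      gaussianReal p.1 v A ≤ ENNReal.ofReal (exp ε) * gaussianReal p.2 v A + ENNReal.ofReal δ :=
    fun p hp ↦ (gaussianReal_apply_le_exp_mul_add hv hp hΔ hvε A).trans (by gcongr)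
  have hκ : Measurable fun x ↦ gaussianReal x v := by fun_prop
  subst hQi hQj hfst hsnd
  exact ⟨Measure.bind_map_apply_le measurable_fst measurable_snd hκ hA (hsupp.mono hpoint),
    Measure.bind_map_apply_le measurable_snd measurable_fst hκ hA
      (hsupp.mono fun p hp ↦ hpoint p.swap (abs_sub_comm p.1 p.2 ▸ hp))⟩

/-- Theorem 3(b) — the Gaussian mechanism with standard deviation
`θ = (Δ/ε)·c`, where `c` exceeds the positive root of `c² − 0.84·δ^{-1/3}·c − ε/2`,
attains the δ-approximation of ε-pufferfish privacy (no restriction ε ≤ 1). -/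
theorem gaussian_mechanism_pufferfish_general
    (ε δ Δ : ℝ) (hε : 0 < ε) (hδ0 : 0 < δ) (hδ1 : δ < 1) (hΔ : 0 < Δ)
    (Pi Pj : Measure ℝ) [IsProbabilityMeasure Pi] [IsProbabilityMeasure Pj]
    (μc : Measure (ℝ × ℝ)) [IsProbabilityMeasure μc]
    (hfst : μc.map Prod.fst = Pi) (hsnd : μc.map Prod.snd = Pj)
    (hsupp : ∀ᵐ p ∂μc, |p.1 - p.2| ≤ Δ)
    (c : ℝ)
    (hc : c > 0.42 * δ ^ (-(1 : ℝ) / 3) +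
      Real.sqrt ((0.42 * δ ^ (-(1 : ℝ) / 3)) ^ 2 + ε / 2))
    (θ : ℝ) (hθ : θ = (Δ / ε) * c)
    (Qi Qj : Measure ℝ)
    (hQi : Qi = Pi.bind (fun x => gaussianReal x (Real.toNNReal (θ ^ 2))))
    (hQj : Qj = Pj.bind (fun x => gaussianReal x (Real.toNNReal (θ ^ 2)))) :
    ∀ A : Set ℝ, MeasurableSet A →
      Qi A ≤ ENNReal.ofReal (Real.exp ε) * Qj A + ENNReal.ofReal δ ∧
      Qj A ≤ ENNReal.ofReal (Real.exp ε) * Qi A + ENNReal.ofReal δ :=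
  gaussian_mechanism_pufferfish_general_general ε δ Δ hε hδ0 hΔ Pi Pj μc hfst hsnd hsupp c hc θ hθ
    Qi Qj hQi hQj
end
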